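/- arXiv:2312.00070 — 4 statements merged into one kernel-verified Lean document; each statement's English description precedes it below -/
import Mathlib

section
/- Let m be a natural number, S ⊆ Fin m, and v ∈ ℝᵐ. Then the supremum of ⟨y, v⟩ over all y ∈ ℝᵐ with ‖y‖₂ ≤ 1 and yᵢ ≥ 0 for every i ∈ S equals √( Σ_{i ∉ S} vᵢ² + Σ_{i ∈ S} (max(vᵢ, 0))² ), and this supremum is attained. -/
/-!
Let `w` be `v` with its negative coordinates in `S` replaced by `0`. For every feasible `y`,
`⟨y, v⟩ ≤ ⟨y, w⟩ ≤ ‖w‖` by Cauchy–Schwarz, while `⟨w, v⟩ = ‖w‖²`, so `w / ‖w‖` (or `0` when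
`w = 0`) attains the bound `‖w‖`.
-/

/-- The Euclidean norm of a vector `v : ι → ℝ`. -/
noncomputable def euclideanNorm {ι : Type*} [Fintype ι] (v : ι → ℝ) : ℝ :=
  Real.sqrt (∑ i, v i ^ 2)

namespace euclideanNorm

variable {ι : Type*} [Fintype ι]

lemma nonneg (v : ι → ℝ) : 0 ≤ euclideanNorm v := Real.sqrt_nonneg _

lemma sq_eq (v : ι → ℝ) : euclideanNorm v ^ 2 = ∑ i, v i ^ 2 :=
  Real.sq_sqrt (Finset.sum_nonneg fun i _ => sq_nonneg (v i))

lemma smul (c : ℝ) (v : ι → ℝ) : euclideanNorm (c • v) = |c| * euclideanNorm v := by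
  simp only [euclideanNorm, Pi.smul_apply, smul_eq_mul, mul_pow, ← Finset.mul_sum,
    Real.sqrt_mul (sq_nonneg c), Real.sqrt_sq_eq_abs]

lemma sum_mul_le (y v : ι → ℝ) : ∑ i, y i * v i ≤ euclideanNorm y * euclideanNorm v :=
  Real.sum_mul_le_sqrt_mul_sqrt _ y v

end euclideanNorm

lemma isGreatest_sum_mul_of_dominated {ι : Type*} [Fintype ι] {K : Set (ι → ℝ)}
    (hK : ∀ c : ℝ, 0 ≤ c → ∀ y ∈ K, c • y ∈ K) {v w : ι → ℝ} (hw : w ∈ K)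
    (hdom : ∀ y ∈ K, ∑ i, y i * v i ≤ ∑ i, y i * w i)
    (hwv : ∑ i, w i * v i = ∑ i, w i ^ 2) :
    IsGreatest {r : ℝ | ∃ y : ι → ℝ, euclideanNorm y ≤ 1 ∧ y ∈ K ∧ r = ∑ i, y i * v i}
      (euclideanNorm w) := by
  set N := euclideanNorm w
  have hN : 0 ≤ N := euclideanNorm.nonneg w
  have hwvN : ∑ i, w i * v i = N ^ 2 := hwv.trans (euclideanNorm.sq_eq w).symm
  constructor
  · refine ⟨N⁻¹ • w, ?_, hK _ (inv_nonneg.mpr hN) w hw, ?_⟩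
    · rw [euclideanNorm.smul, abs_of_nonneg (inv_nonneg.mpr hN)]
      exact inv_mul_le_one
    · simp only [Pi.smul_apply, smul_eq_mul, mul_assoc, ← Finset.mul_sum, hwvN]
      rcases eq_or_ne N 0 with h | h
      · simp [h]
      · field_simp
  · rintro r ⟨y, hy, hyK, rfl⟩
    calc ∑ i, y i * v i ≤ ∑ i, y i * w i := hdom y hyK
      _ ≤ euclideanNorm y * N := euclideanNorm.sum_mul_le y w
      _ ≤ 1 * N := mul_le_mul_of_nonneg_right hy hN
      _ = N := one_mul N

section posPartOn

variable {ι : Type*} [DecidableEq ι]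

/-- The nearest point to `v` in the cone `{y | ∀ i ∈ S, 0 ≤ y i}`. -/
def posPartOn (S : Finset ι) (v : ι → ℝ) (i : ι) : ℝ :=
  if i ∈ S then max (v i) 0 else v i

variable (S : Finset ι) (v : ι → ℝ)

lemma posPartOn_nonneg {i : ι} (hi : i ∈ S) : 0 ≤ posPartOn S v i := by
  simp [posPartOn, hi]

lemma mul_le_mul_posPartOn {y : ι → ℝ} (hy : ∀ i ∈ S, 0 ≤ y i) (i : ι) :
    y i * v i ≤ y i * posPartOn S v i := by
  by_cases hi : i ∈ S
  · simpa [posPartOn, hi] using mul_le_mul_of_nonneg_left (le_max_left (v i) 0) (hy i hi)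
  · simp [posPartOn, hi]

lemma posPartOn_mul_self (i : ι) : posPartOn S v i * v i = posPartOn S v i ^ 2 := by
  by_cases hi : i ∈ S
  · rcases le_total (v i) 0 with h | h <;> simp [posPartOn, hi, h, sq]
  · simp [posPartOn, hi, sq]

lemma sum_posPartOn_sq [Fintype ι] :
    ∑ i, posPartOn S v i ^ 2 = ∑ i ∈ Sᶜ, v i ^ 2 + ∑ i ∈ S, max (v i) 0 ^ 2 := by
  rw [← Finset.sum_compl_add_sum S]
  congr 1 <;> refine Finset.sum_congr rfl fun i hi => ?_
  · simp [posPartOn, Finset.mem_compl.mp hi]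
  · simp [posPartOn, hi]

end posPartOn

/-- The supremum of `⟨y, v⟩` over `y` in the unit ball with `yᵢ ≥ 0` for `i ∈ S` equals
`√(Σ_{i∉S} vᵢ² + Σ_{i∈S} max(vᵢ,0)²)`, and it is attained. -/
theorem stmt3 (m : ℕ) (S : Finset (Fin m)) (v : Fin m → ℝ) :
    IsGreatest
      {r : ℝ | ∃ y : Fin m → ℝ,
        euclideanNorm y ≤ 1 ∧ (∀ i ∈ S, 0 ≤ y i) ∧ r = ∑ i, y i * v i}
      (Real.sqrt (∑ i ∈ Sᶜ, v i ^ 2 + ∑ i ∈ S, max (v i) 0 ^ 2)) := by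
  rw [← sum_posPartOn_sq]
  exact isGreatest_sum_mul_of_dominated (K := {y | ∀ i ∈ S, 0 ≤ y i})
    (fun c hc y hy i hi => mul_nonneg hc (hy i hi)) (fun i => posPartOn_nonneg S v)
    (fun y hy => Finset.sum_le_sum fun i _ => mul_le_mul_posPartOn S v hy i)
    (Finset.sum_congr rfl fun i _ => posPartOn_mul_self S v i)
end

section
/- Let I and J be finite nonempty sets, D : I × J → ℝ, and β > 0. Then −min_{i∈I} max_{j∈J} D(i,j) − (log |J|)/β ≤ (1/β) · log( Σ_{i∈I} ( Σ_{j∈J} exp(β·D(i,j)) )^{−1} ) ≤ −min_{i∈I} max_{j∈J} D(i,j) + (log |I|)/β. -/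
/-!
`log ∑ exp` is a soft maximum: it lies between `⨆ f` and `⨆ f + log (card ι)`. The inner sums
give `L i := log ∑ⱼ exp (β D i j)` within `log |J|` of `β ⨆ⱼ D i j`, and `Z = ∑ᵢ exp (-L i)` is a
soft maximum of `-L`, within `log |I|` of `⨆ᵢ (-L i)`, which in turn is within `log |J|` of
`-β ⨅ᵢ ⨆ⱼ D i j`.
-/

open Real Finset

section SoftMax

variable {ι : Type*} [Fintype ι] [Nonempty ι]

theorem iSup_le_log_sum_exp (f : ι → ℝ) : ⨆ i, f i ≤ log (∑ i, exp (f i)) :=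
  ciSup_le fun i => (le_log_iff_exp_le (by positivity)).2 <|
    single_le_sum (fun j _ => (exp_pos (f j)).le) (mem_univ i)

theorem log_sum_exp_le_iSup_add_log_card (f : ι → ℝ) :
    log (∑ i, exp (f i)) ≤ (⨆ i, f i) + log (Fintype.card ι) := by
  have hsum : ∑ i, exp (f i) ≤ Fintype.card ι * exp (⨆ i, f i) :=
    calc ∑ i, exp (f i) ≤ ∑ _i : ι, exp (⨆ i, f i) :=
          sum_le_sum fun i _ => exp_le_exp.2 (Finite.le_ciSup f i)
      _ = Fintype.card ι * exp (⨆ i, f i) := by simp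
  calc log (∑ i, exp (f i)) ≤ log (Fintype.card ι * exp (⨆ i, f i)) :=
        log_le_log (by positivity) hsum
    _ = (⨆ i, f i) + log (Fintype.card ι) := by
        rw [log_mul (by positivity) (exp_ne_zero _), log_exp, add_comm]

end SoftMax

theorem log_sum_inv_sum_exp_mem_Icc {I J : Type*} [Fintype I] [Fintype J] [Nonempty I]
    [Nonempty J] (D : I → J → ℝ) :
    log (∑ i, (∑ j, exp (D i j))⁻¹) ∈
      Set.Icc (-(⨅ i, ⨆ j, D i j) - log (Fintype.card J))
        (-(⨅ i, ⨆ j, D i j) + log (Fintype.card I)) := by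
  set L : I → ℝ := fun i => log (∑ j, exp (D i j))
  have hZ : ∑ i, (∑ j, exp (D i j))⁻¹ = ∑ i, exp (-L i) := by
    refine sum_congr rfl fun i _ => ?_
    rw [exp_neg, exp_log (by positivity)]
  obtain ⟨i₀, hi₀⟩ := exists_eq_ciInf_of_finite (f := fun i => ⨆ j, D i j)
  have hsup_lower : -(⨅ i, ⨆ j, D i j) - log (Fintype.card J) ≤ ⨆ i, -L i :=
    Finite.le_ciSup_of_le i₀ (by linarith [log_sum_exp_le_iSup_add_log_card (D i₀)])
  have hsup_upper : ⨆ i, -L i ≤ -(⨅ i, ⨆ j, D i j) := ciSup_le fun i => by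
    linarith [iSup_le_log_sum_exp (D i), Finite.ciInf_le (fun i => ⨆ j, D i j) i]
  rw [hZ]
  exact ⟨hsup_lower.trans (iSup_le_log_sum_exp _),
    (log_sum_exp_le_iSup_add_log_card _).trans (by linarith)⟩

/-- Two-sided bound for the two-level free-energy functional with outer exponent
`s = −1`: up to `(log |J|)/β` and `(log |I|)/β` corrections, `(1/β)·log Z` with
`Z = Σ_{i∈I}(Σ_{j∈J} e^{β D(i,j)})⁻¹` equals `−min_{i∈I} max_{j∈J} D(i,j)`. -/
theorem stmt9 (I J : Type) [Fintype I] [Fintype J] [Nonempty I] [Nonempty J]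
    (D : I → J → ℝ) (β : ℝ) (hβ : 0 < β) :
    (-(⨅ i, ⨆ j, D i j) - Real.log (Fintype.card J) / β
        ≤ (1 / β) * Real.log (∑ i, (∑ j, Real.exp (β * D i j))⁻¹))
      ∧ ((1 / β) * Real.log (∑ i, (∑ j, Real.exp (β * D i j))⁻¹)
        ≤ -(⨅ i, ⨆ j, D i j) + Real.log (Fintype.card I) / β) := by
  obtain ⟨hlower, hupper⟩ := log_sum_inv_sum_exp_mem_Icc fun i j => β * D i j
  have hscale : ⨅ i, ⨆ j, β * D i j = β * ⨅ i, ⨆ j, D i j := by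
    simp only [← mul_iSup_of_nonneg hβ.le, mul_iInf_of_nonneg hβ.le]
  rw [hscale] at hlower hupper
  rw [one_div_mul_eq_div, le_div_iff₀ hβ, div_le_iff₀ hβ]
  constructor
  · calc (-(⨅ i, ⨆ j, D i j) - log (Fintype.card J) / β) * β
        = -(β * ⨅ i, ⨆ j, D i j) - log (Fintype.card J) := by field_simp
      _ ≤ _ := hlower
  · calc _ ≤ -(β * ⨅ i, ⨆ j, D i j) + log (Fintype.card I) := hupper
      _ = (-(⨅ i, ⨆ j, D i j) + log (Fintype.card I) / β) * β := by field_simp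
end

section
/- Let I and J be finite nonempty sets and D : I × J → ℝ. Then, as β → +∞, the quantity (1/β) · log( Σ_{i∈I} ( Σ_{j∈J} exp(β·D(i,j)) )^{−1} ) converges to −min_{i∈I} max_{j∈J} D(i,j). -/
/-!
Log-sum-exp is a soft maximum: `max x ≤ log ∑ exp x ≤ max x + log (card ι)`. Hence if each `f i β`
is `β * c i` up to a bounded error, then `log ∑ i, exp (f i β)` is `β * max c` up to a bounded
error. Applied to the inner sum this gives `log ∑ j, exp (β * D i j) = β * max_j D i j + O(1)`;
since `(∑ j, …)⁻¹ = exp (-log ∑ j, …)`, applying it again to the outer sum gives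
`log Z = -β * min_i max_j D i j + O(1)`, and dividing by `β` kills the error.
-/

open Real Filter Topology Asymptotics

section LogSumExp

variable {ι : Type*} [Fintype ι]

lemma le_log_sum_exp (x : ι → ℝ) (i : ι) : x i ≤ log (∑ j, exp (x j)) :=
  (le_log_iff_exp_le (Finset.sum_pos (fun j _ => exp_pos (x j)) ⟨i, Finset.mem_univ i⟩)).2
    (Finset.single_le_sum (fun j _ => (exp_pos (x j)).le) (Finset.mem_univ i))

lemma log_sum_exp_le [Nonempty ι] {x : ι → ℝ} {b : ℝ} (hx : ∀ i, x i ≤ b) :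
    log (∑ i, exp (x i)) ≤ b + log (Fintype.card ι) := by
  have hcard : (0 : ℝ) < Fintype.card ι := by exact_mod_cast Fintype.card_pos
  calc log (∑ i, exp (x i))
      ≤ log (Fintype.card ι * exp b) := by
        refine log_le_log (Finset.sum_pos (fun i _ => exp_pos _) Finset.univ_nonempty) ?_
        simpa using Finset.sum_le_sum fun i (_ : i ∈ Finset.univ) => exp_le_exp.2 (hx i)
    _ = b + log (Fintype.card ι) := by
        rw [log_mul hcard.ne' (exp_pos b).ne', log_exp, add_comm]

lemma isBigO_log_sum_exp_sub_mul_iSup [Nonempty ι] {f : ι → ℝ → ℝ} {c : ι → ℝ}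
    (hf : ∀ i, (fun β => f i β - β * c i) =O[atTop] fun _ => (1 : ℝ)) :
    (fun β => log (∑ i, exp (f i β)) - β * ⨆ i, c i) =O[atTop] fun _ => (1 : ℝ) := by
  set err := fun β => ∑ i, |f i β - β * c i|
  have herr : err =O[atTop] fun _ => (1 : ℝ) :=
    IsBigO.fun_sum fun i _ => (hf i).abs_left
  have hc : BddAbove (Set.range c) := (Set.finite_range c).bddAbove
  have hlog : 0 ≤ log (Fintype.card ι) := log_natCast_nonneg _
  refine (IsBigO.of_bound' ?_).trans (herr.add (isBigO_const_one ℝ (log (Fintype.card ι)) _))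
  filter_upwards [eventually_ge_atTop 0] with β hβ
  have hdev : ∀ i, |f i β - β * c i| ≤ err β := fun i =>
    Finset.single_le_sum (f := fun i => |f i β - β * c i|) (fun i _ => abs_nonneg _)
      (Finset.mem_univ i)
  have hlower : β * ⨆ i, c i ≤ log (∑ i, exp (f i β)) + err β := by
    rw [Real.mul_iSup_of_nonneg hβ]
    exact ciSup_le fun i => by linarith [le_log_sum_exp (f · β) i, (abs_le.1 (hdev i)).1]
  have hupper : log (∑ i, exp (f i β)) ≤ β * (⨆ i, c i) + err β + log (Fintype.card ι) :=
    log_sum_exp_le fun i => by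
      linarith [(abs_le.1 (hdev i)).2, mul_le_mul_of_nonneg_left (le_ciSup hc i) hβ]
  have herr0 : 0 ≤ err β := Finset.sum_nonneg fun i _ => abs_nonneg _
  rw [Real.norm_eq_abs, Real.norm_of_nonneg (add_nonneg herr0 hlog), abs_le]
  constructor <;> linarith

end LogSumExp

lemma tendsto_one_div_mul_of_isBigO_sub_mul {f : ℝ → ℝ} {c : ℝ}
    (hf : (fun β => f β - β * c) =O[atTop] fun _ => (1 : ℝ)) :
    Tendsto (fun β => 1 / β * f β) atTop (𝓝 c) := by
  have hdev : Tendsto (fun β => 1 / β * (f β - β * c)) atTop (𝓝 0) := by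
    refine ((isBigO_refl (fun β : ℝ => 1 / β) atTop).mul hf).trans_tendsto ?_
    simpa using tendsto_inv_atTop_zero
  refine (by simpa using hdev.const_add c : Tendsto _ atTop (𝓝 c)).congr' ?_
  filter_upwards [eventually_gt_atTop 0] with β hβ
  field_simp
  ring

/-- As `β → ∞`, the two-level free-energy functional `(1/β)·log Z` with
`Z = Σ_{i∈I}(Σ_{j∈J} e^{β D(i,j)})⁻¹` converges to `−min_{i∈I} max_{j∈J} D(i,j)`. -/
theorem stmt10 (I J : Type) [Fintype I] [Fintype J] [Nonempty I] [Nonempty J]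
    (D : I → J → ℝ) :
    Filter.Tendsto
      (fun β : ℝ => (1 / β) * Real.log (∑ i, (∑ j, Real.exp (β * D i j))⁻¹))
      Filter.atTop (nhds (-(⨅ i, ⨆ j, D i j))) := by
  set L : I → ℝ → ℝ := fun i β => log (∑ j, exp (β * D i j))
  have hinner : ∀ i, (fun β => L i β - β * ⨆ j, D i j) =O[atTop] fun _ => (1 : ℝ) := fun i =>
    isBigO_log_sum_exp_sub_mul_iSup fun j =>
      (isBigO_zero _ _).congr_left fun β => (sub_self _).symm
  have houter := isBigO_log_sum_exp_sub_mul_iSup (f := fun i β => -L i β)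
    (c := fun i => -⨆ j, D i j) fun i => (hinner i).neg_left.congr_left fun β => by ring
  have hexp : ∀ β i, exp (-L i β) = (∑ j, exp (β * D i j))⁻¹ := fun β i => by
    rw [exp_neg, exp_log (Finset.sum_pos (fun j _ => exp_pos _) Finset.univ_nonempty)]
  have hneg : ⨆ i, -⨆ j, D i j = -⨅ i, ⨆ j, D i j := by
    simpa using (Real.mul_iInf_of_nonpos (by norm_num : (-1 : ℝ) ≤ 0) fun i => ⨆ j, D i j).symm
  simp only [hexp, hneg] at houter
  exact tendsto_one_div_mul_of_isBigO_sub_mul houter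
end

section
/- Let μ be the law of an m×n random matrix G whose entries are independent standard Gaussians (the product over Fin m × Fin n of the standard real Gaussian measure). Let F ⊆ ℝⁿ and H ⊆ ℝᵐ be finite nonempty sets and f : ℝⁿ → ℝ. Then for each β > 0 the function G ↦ (1/β)·log( Σ_{x∈F} ( Σ_{y∈H} exp(β·(f(x) + ⟨y, Gx⟩)) )^{−1} ) is μ-integrable, the function G ↦ min_{x∈F} max_{y∈H} (f(x) + ⟨y, Gx⟩) is μ-integrable, and as β → +∞ the expectation under μ of the former converges to minus the expectation under μ of the latter. -/
open MeasureTheory ProbabilityTheory Real Filter Topology Finset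

/-! For reals `aᵢ`, `i ∈ s`, the log-sum-exp is squeezed as
`max aᵢ ≤ log ∑ exp aᵢ ≤ max aᵢ + log #s`. Applying this to the inner sum (a soft maximum
over `H`) and then to the outer sum of inverses (a soft minimum over `F`) shows that the free
energy at inverse temperature `β` differs from minus the min-max by at most
`max (log #F) (log #H) / β`, uniformly in the matrix `G`. The min-max is integrable, being a
lattice combination of finitely many affine functions of Gaussian entries, so the free energy is
integrable too, and uniform convergence on a probability space passes to the expectations. -/

namespace Finset

variable {ι κ : Type*}

theorem sup'_le_log_sum_exp {s : Finset ι} (hs : s.Nonempty) (a : ι → ℝ) :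
    s.sup' hs a ≤ log (∑ i ∈ s, exp (a i)) := by
  obtain ⟨i, hi, hmax⟩ := s.exists_mem_eq_sup' hs a
  rw [hmax, le_log_iff_exp_le (sum_pos (fun _ _ => exp_pos _) hs)]
  exact single_le_sum (f := fun i => exp (a i)) (fun _ _ => (exp_pos _).le) hi

theorem log_sum_exp_le_sup'_add_log_card {s : Finset ι} (hs : s.Nonempty) (a : ι → ℝ) :
    log (∑ i ∈ s, exp (a i)) ≤ s.sup' hs a + log #s := by
  have hcard : (0 : ℝ) < #s := by exact_mod_cast hs.card_pos
  have hsum : ∑ i ∈ s, exp (a i) ≤ #s * exp (s.sup' hs a) := by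
    simpa [nsmul_eq_mul] using sum_le_card_nsmul s _ _
      fun i hi => exp_le_exp.2 (le_sup' a hi)
  calc log (∑ i ∈ s, exp (a i)) ≤ log (#s * exp (s.sup' hs a)) :=
        log_le_log (sum_pos (fun _ _ => exp_pos _) hs) hsum
    _ = s.sup' hs a + log #s := by
        rw [log_mul hcard.ne' (exp_pos _).ne', log_exp, add_comm]

theorem abs_log_sum_inv_sum_exp_div_add_inf'_sup'_le {s : Finset ι} {t : Finset κ}
    (hs : s.Nonempty) (ht : t.Nonempty) (a : ι → κ → ℝ) {β : ℝ} (hβ : 0 < β) :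
    |1 / β * log (∑ x ∈ s, (∑ y ∈ t, exp (β * a x y))⁻¹)
        + s.inf' hs (fun x => t.sup' ht (a x))| ≤ max (log #s) (log #t) / β := by
  set M := fun x => t.sup' ht (a x)
  set L := fun x => log (∑ y ∈ t, exp (β * a x y))
  have hL : ∀ x, β * M x ≤ L x ∧ L x ≤ β * M x + log #t := fun x => by
    rw [mul₀_sup' hβ.le]
    exact ⟨sup'_le_log_sum_exp ht _, log_sum_exp_le_sup'_add_log_card ht _⟩
  have hinv : ∀ x, (∑ y ∈ t, exp (β * a x y))⁻¹ = exp (-L x) := fun x => by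
    rw [exp_neg, exp_log (sum_pos (fun _ _ => exp_pos _) ht)]
  have hsoftmin : -(β * s.inf' hs M) - log #t ≤ s.sup' hs (fun x => -L x) ∧
      s.sup' hs (fun x => -L x) ≤ -(β * s.inf' hs M) := by
    obtain ⟨x₀, hx₀, hmin⟩ := s.exists_mem_eq_inf' hs M
    refine ⟨?_, sup'_le _ _ fun x hx => ?_⟩
    · refine le_trans ?_ (le_sup' (fun x => -L x) hx₀)
      rw [hmin]
      linarith [(hL x₀).2]
    · linarith [(hL x).1, mul_le_mul_of_nonneg_left (inf'_le M hx) hβ.le]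
  have hlow := sup'_le_log_sum_exp hs fun x => -L x
  have hupp := log_sum_exp_le_sup'_add_log_card hs fun x => -L x
  simp_rw [hinv]
  set T := log (∑ x ∈ s, exp (-L x))
  have hrescale : 1 / β * T + s.inf' hs M = (T + β * s.inf' hs M) / β := by field_simp
  rw [hrescale, abs_div, abs_of_pos hβ]
  refine div_le_div_of_nonneg_right (abs_le.2 ⟨?_, ?_⟩) hβ.le <;>
    linarith [le_max_left (log #s) (log #t), le_max_right (log #s) (log #t)]

end Finset

section Lattice

variable {α β ι : Type*} [MeasurableSpace α] {μ : Measure α}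
  [NormedAddCommGroup β] [Lattice β] [HasSolidNorm β] [IsOrderedAddMonoid β]

theorem MeasureTheory.Integrable.finset_sup' {s : Finset ι} (hs : s.Nonempty) {f : ι → α → β}
    (hf : ∀ i ∈ s, Integrable (f i) μ) : Integrable (fun a => s.sup' hs fun i => f i a) μ := by
  simpa only [← Finset.sup'_apply] using
    Finset.sup'_induction (p := fun g => Integrable g μ) hs _ (fun _ hf _ hg => hf.sup hg) hf

theorem MeasureTheory.Integrable.finset_inf' {s : Finset ι} (hs : s.Nonempty) {f : ι → α → β}
    (hf : ∀ i ∈ s, Integrable (f i) μ) : Integrable (fun a => s.inf' hs fun i => f i a) μ := by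
  simpa only [← Finset.inf'_apply] using
    Finset.inf'_induction (p := fun g => Integrable g μ) hs _ (fun _ hf _ hg => hf.inf hg) hf

end Lattice

section BoundedDistance

variable {α E ι : Type*} [MeasurableSpace α] {μ : Measure α} [IsFiniteMeasure μ]
  [NormedAddCommGroup E]

theorem MeasureTheory.Integrable.of_norm_sub_le {f g : α → E} (hf : Integrable f μ)
    (hg : AEStronglyMeasurable g μ) {c : ℝ} (hgf : ∀ a, ‖g a - f a‖ ≤ c) : Integrable g μ := by
  simpa using hf.add (Integrable.of_bound (hg.sub hf.1) c (ae_of_all _ hgf))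

theorem tendsto_integral_of_norm_sub_le [NormedSpace ℝ E] {l : Filter ι} {F : ι → α → E} {f : α → E}
    {ε : ι → ℝ} (hε : Tendsto ε l (𝓝 0)) (hF : ∀ᶠ i in l, Integrable (F i) μ)
    (hf : Integrable f μ) (hFf : ∀ᶠ i in l, ∀ a, ‖F i a - f a‖ ≤ ε i) :
    Tendsto (fun i => ∫ a, F i a ∂μ) l (𝓝 (∫ a, f a ∂μ)) := by
  rw [tendsto_iff_norm_sub_tendsto_zero]
  refine squeeze_zero' (Eventually.of_forall fun _ => norm_nonneg _) ?_
    (by simpa using hε.mul_const (μ.real Set.univ))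
  filter_upwards [hF, hFf] with i hFi hFfi
  rw [← integral_sub hFi hf]
  exact norm_integral_le_of_norm_le_const (ae_of_all _ hFfi)

end BoundedDistance

theorem integrable_sum_mul_sum_pi {ι κ : Type*} [Fintype ι] [Fintype κ]
    {ν : ι × κ → Measure ℝ} [∀ k, IsFiniteMeasure (ν k)] (hν : ∀ k, Integrable id (ν k))
    (x : κ → ℝ) (y : ι → ℝ) :
    Integrable (fun G : ι × κ → ℝ => ∑ i, y i * ∑ j, G (i, j) * x j) (Measure.pi ν) :=
  integrable_finsetSum _ fun i _ => (integrable_finsetSum _ fun j _ =>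
    (integrable_eval (hν (i, j))).mul_const (x j)).const_mul (y i)

/-- Let `μ` be the law of an `m×n` matrix with i.i.d. standard Gaussian entries. For
finite nonempty `F ⊆ ℝⁿ`, `H ⊆ ℝᵐ` and `f : ℝⁿ → ℝ`, the free-energy functional
`G ↦ (1/β)·log(Σ_{x∈F}(Σ_{y∈H} e^{β(f(x)+⟨y,Gx⟩)})⁻¹)` is integrable for every `β > 0`,
the min-max `G ↦ min_{x∈F} max_{y∈H} (f(x)+⟨y,Gx⟩)` is integrable, and as `β → ∞` the
expectation of the former converges to minus the expectation of the latter. -/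
theorem stmt12 (m n : ℕ) (F : Finset (Fin n → ℝ)) (H : Finset (Fin m → ℝ))
    (hF : F.Nonempty) (hH : H.Nonempty) (f : (Fin n → ℝ) → ℝ) :
    let μ : Measure ((Fin m × Fin n) → ℝ) := Measure.pi fun _ => gaussianReal 0 1
    let φ : ℝ → ((Fin m × Fin n) → ℝ) → ℝ := fun β G =>
      (1 / β) * Real.log
        (∑ x ∈ F, (∑ y ∈ H, Real.exp (β * (f x + ∑ i, y i * ∑ j, G (i, j) * x j)))⁻¹)
    let ψ : ((Fin m × Fin n) → ℝ) → ℝ := fun G =>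
      F.inf' hF fun x => H.sup' hH fun y => f x + ∑ i, y i * ∑ j, G (i, j) * x j
    (∀ β : ℝ, 0 < β → Integrable (φ β) μ)
      ∧ Integrable ψ μ
      ∧ Filter.Tendsto (fun β : ℝ => ∫ G, φ β G ∂μ) Filter.atTop
          (nhds (-∫ G, ψ G ∂μ)) := by
  intro μ φ ψ
  have hψ : Integrable ψ μ := Integrable.finset_inf' hF fun x _ =>
    Integrable.finset_sup' hH fun y _ => (integrable_const (f x)).add
      (integrable_sum_mul_sum_pi (fun _ => IsGaussian.integrable_id) x y)
  have hdist : ∀ β, 0 < β → ∀ G, ‖φ β G - -ψ G‖ ≤ max (log #F) (log #H) / β :=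
    fun β hβ G => by
      rw [sub_neg_eq_add, Real.norm_eq_abs]
      exact abs_log_sum_inv_sum_exp_div_add_inf'_sup'_le hF hH
        (fun x y => f x + ∑ i, y i * ∑ j, G (i, j) * x j) hβ
  have hφ : ∀ β, 0 < β → Integrable (φ β) μ := fun β hβ =>
    hψ.neg.of_norm_sub_le (by fun_prop) (hdist β hβ)
  refine ⟨hφ, hψ, ?_⟩
  rw [← integral_neg]
  exact tendsto_integral_of_norm_sub_le (tendsto_const_nhds.div_atTop tendsto_id)
    ((eventually_gt_atTop 0).mono hφ) hψ.neg ((eventually_gt_atTop 0).mono hdist)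
end
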